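/- arXiv:0809.1895 — 2 statements merged into one kernel-verified Lean document; each statement's English description precedes it below -/
import Mathlib

section
/- No randomized online algorithm for Second-Price Matching achieves a competitive ratio better than 2: there is a distribution over instances with m keywords on which the optimal offline second-price matching has value m, while every deterministic online algorithm has expected profit at most (m+1)/2. -/
/-- A second-price matching for the instance with keywords `Fin m` (index arrival
order) and bidder neighborhoods `ks u ⊆ ℕ`. -/
def IsSecondPriceMatching {m : ℕ} (ks : Fin m → Finset ℕ)
    (S : Finset (Fin m)) (g w : Fin m → ℕ) : Prop :=
  (∀ u ∈ S, g u ∈ ks u ∧ w u ∈ ks u ∧ g u ≠ w u) ∧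
  (∀ u ∈ S, ∀ u' ∈ S, u ≠ u' → g u ≠ g u') ∧
  (∀ u ∈ S, ∀ u' ∈ S, u' < u → g u' ≠ g u ∧ g u' ≠ w u)

/-- Running a deterministic online algorithm `Alg` on the 2PM instance `ks`:
(matched bidders, profit) after `t` steps. -/
def onlineRun (m : ℕ) (ks : Fin m → Finset ℕ)
    (Alg : List (Finset ℕ) → Option ℕ) : ℕ → Finset ℕ × ℕ
  | 0 => (∅, 0)
  | t + 1 =>
    let s := onlineRun m ks Alg t
    if h : t < m then
      match Alg ((List.ofFn ks).take (t + 1)) with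
      | some v =>
        if v ∈ ks ⟨t, h⟩ ∧ v ∉ s.1 then
          (insert v s.1,
            s.2 + if ∃ w ∈ ks ⟨t, h⟩, w ≠ v ∧ w ∉ s.1 then 1 else 0)
        else s
      | none => s
    else s

/-- The shared bidder of the random path-like instance: keyword `t` is adjacent to
`pathBidder b t` and to the fresh bidder `t + 1`; the coin `b t` decides which of the
two bidders of keyword `t` is shared with keyword `t + 1`. -/
def pathBidder (b : ℕ → Bool) : ℕ → ℕ
  | 0 => 0
  | t + 1 => if b t then pathBidder b t else t + 1

/-- The random instance: keyword `t` has the two adjacent bidders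
`{pathBidder b t, t + 1}`. -/
def pathInstance (m : ℕ) (b : ℕ → Bool) : Fin m → Finset ℕ :=
  fun t => {pathBidder b t.val, t.val + 1}

lemma pathBidder_le (b : ℕ → Bool) (t : ℕ) : pathBidder b t ≤ t := by
  induction t with
  | zero => simp [pathBidder]
  | succ t ih => simp only [pathBidder]; split <;> omega

lemma pathBidder_congr {b b' : ℕ → Bool} {t : ℕ} (h : ∀ s < t, b s = b' s) :
    pathBidder b t = pathBidder b' t := by
  induction t with
  | zero => rfl
  | succ t ih =>
    simp only [pathBidder, h t (by omega), ih (fun s hs => h s (by omega))]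

lemma pathBidder_ne_of_true {b : ℕ → Bool} {u' u : ℕ} (h : u' < u) (hb : b u' = true) :
    pathBidder b u ≠ u' + 1 := by
  induction u with
  | zero => omega
  | succ u ih =>
    rcases Nat.lt_succ_iff_lt_or_eq.mp h with h' | rfl
    · simp only [pathBidder]
      split
      · exact ih h'
      · omega
    · simp only [pathBidder, hb, if_true]
      have := pathBidder_le b u'
      omega

lemma pathBidder_gt_of_false {b : ℕ → Bool} {u' u : ℕ} (h : u' < u) (hb : b u' = false) :
    u' < pathBidder b u := by
  induction u with
  | zero => omega
  | succ u ih =>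
    rcases Nat.lt_succ_iff_lt_or_eq.mp h with h' | rfl
    · simp only [pathBidder]
      split
      · exact ih h'
      · omega
    · simp [pathBidder, hb]

lemma part1 (m : ℕ) (b : ℕ → Bool) :
    ∃ (S : Finset (Fin m)) (g w : Fin m → ℕ),
      IsSecondPriceMatching (pathInstance m b) S g w ∧ S.card = m := by
  set g : Fin m → ℕ := fun t => if b t.val then t.val + 1 else pathBidder b t.val with hg
  set w : Fin m → ℕ := fun t => if b t.val then pathBidder b t.val else t.val + 1 with hw
  have key : ∀ u' u : Fin m, u'.val < u.val →
      g u' ≠ pathBidder b u.val ∧ g u' ≠ u.val + 1 := by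
    intro u' u h
    constructor
    · simp only [hg]
      rcases Bool.eq_false_or_eq_true (b u'.val) with hb | hb
      · simp only [hb, if_true]
        exact fun he => pathBidder_ne_of_true h hb he.symm
      · have h1 := pathBidder_gt_of_false h hb
        have h2 := pathBidder_le b u'.val
        simp only [hb, Bool.false_eq_true, if_false]
        omega
    · have : g u' ≤ u'.val + 1 := by
        simp only [hg]; split
        · omega
        · have := pathBidder_le b u'.val; omega
      omega
  have key2 : ∀ u' u : Fin m, u'.val < u.val → g u' ≠ g u ∧ g u' ≠ w u := by
    intro u' u h
    obtain ⟨h1, h2⟩ := key u' u h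
    simp only [hg, hw]
    rcases Bool.eq_false_or_eq_true (b u.val) with hb | hb <;>
      simp only [hb, if_false, if_true] <;> exact ⟨by simpa [hg] using ‹_›, by simpa [hg] using ‹_›⟩
  refine ⟨Finset.univ, g, w, ⟨?_, ?_, ?_⟩, by simp⟩
  · intro u _
    have hle := pathBidder_le b u.val
    refine ⟨?_, ?_, ?_⟩ <;> simp only [hg, hw, pathInstance, Finset.mem_insert, Finset.mem_singleton]
    · rcases Bool.eq_false_or_eq_true (b u.val) with hb | hb <;> simp [hb]
    · rcases Bool.eq_false_or_eq_true (b u.val) with hb | hb <;> simp [hb]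
    · rcases Bool.eq_false_or_eq_true (b u.val) with hb | hb <;> simp [hb] <;> omega
  · intro u _ u' _ hne
    rcases lt_or_gt_of_ne hne with hlt | hlt
    · exact (key2 u u' hlt).1
    · exact fun he => (key2 u' u hlt).1 he.symm
  · intro u _ u' _ hlt
    exact key2 u' u hlt

lemma onlineRun_congr (m : ℕ) (ks ks' : Fin m → Finset ℕ) (Alg : List (Finset ℕ) → Option ℕ)
    (t : ℕ) (h : ∀ u : Fin m, u.val < t → ks u = ks' u) :
    onlineRun m ks Alg t = onlineRun m ks' Alg t := by
  induction t with
  | zero => rfl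
  | succ t ih =>
    have ih' := ih (fun u hu => h u (by omega))
    by_cases hm : t < m
    · have hks : ks ⟨t, hm⟩ = ks' ⟨t, hm⟩ := h ⟨t, hm⟩ (by simp)
      have hl : (List.ofFn ks).take (t+1) = (List.ofFn ks').take (t+1) := by
        apply List.ext_getElem
        · simp
        · intro i h1 h2
          simp only [List.getElem_take, List.getElem_ofFn]
          obtain ⟨-, hi⟩ : i < t + 1 ∧ i < m := by simpa using h2
          exact h ⟨i, hi⟩ (by
            have : i < t + 1 := by simp at h1; omega
            simpa using this)
      simp only [onlineRun, ih', hl, hks]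
    · simp only [onlineRun, ih', dif_neg hm]

lemma onlineRun_succ_cases (m : ℕ) (ks : Fin m → Finset ℕ) (Alg : List (Finset ℕ) → Option ℕ)
    (t : ℕ) (h : t < m) :
    onlineRun m ks Alg (t+1) = onlineRun m ks Alg t ∨
    ∃ v, v ∈ ks ⟨t, h⟩ ∧ v ∉ (onlineRun m ks Alg t).1 ∧
      onlineRun m ks Alg (t+1) =
        (insert v (onlineRun m ks Alg t).1,
         (onlineRun m ks Alg t).2 +
           if ∃ w ∈ ks ⟨t, h⟩, w ≠ v ∧ w ∉ (onlineRun m ks Alg t).1 then 1 else 0) := by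
  rw [onlineRun]
  simp only [dif_pos h]
  cases hA : Alg ((List.ofFn ks).take (t + 1)) with
  | none => left; rfl
  | some v =>
    by_cases hv : v ∈ ks ⟨t, h⟩ ∧ v ∉ (onlineRun m ks Alg t).1
    · right
      exact ⟨v, hv.1, hv.2, by simp only [if_pos hv]⟩
    · left; simp only [if_neg hv]

lemma onlineRun_mono (m : ℕ) (ks : Fin m → Finset ℕ) (Alg : List (Finset ℕ) → Option ℕ)
    (t : ℕ) : (onlineRun m ks Alg t).1 ⊆ (onlineRun m ks Alg (t+1)).1 := by
  by_cases h : t < m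
  · rcases onlineRun_succ_cases m ks Alg t h with he | ⟨v, _, _, he⟩
    · rw [he]
    · rw [he]; exact Finset.subset_insert _ _
  · rw [onlineRun]; simp [dif_neg h]

lemma onlineRun_profit_mono (m : ℕ) (ks : Fin m → Finset ℕ) (Alg : List (Finset ℕ) → Option ℕ)
    (t : ℕ) : (onlineRun m ks Alg t).2 ≤ (onlineRun m ks Alg (t+1)).2 ∧
      (onlineRun m ks Alg (t+1)).2 ≤ (onlineRun m ks Alg t).2 + 1 := by
  by_cases h : t < m
  · rcases onlineRun_succ_cases m ks Alg t h with he | ⟨v, _, _, he⟩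
    · rw [he]; omega
    · rw [he]; simp only; split <;> omega
  · rw [onlineRun]; simp [dif_neg h]

lemma matched_le (m : ℕ) (c : ℕ → Bool) (Alg : List (Finset ℕ) → Option ℕ) (t : ℕ) :
    ∀ x ∈ (onlineRun m (pathInstance m c) Alg t).1, x ≤ t := by
  induction t with
  | zero => intro x hx; rw [onlineRun] at hx; simp at hx
  | succ t ih =>
    intro x hx
    by_cases h : t < m
    · rcases onlineRun_succ_cases m (pathInstance m c) Alg t h with he | ⟨v, hv, _, he⟩
      · rw [he] at hx; exact le_trans (ih x hx) (by omega)
      · rw [he] at hx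
        simp only [Finset.mem_insert] at hx
        rcases hx with rfl | hx
        · simp only [pathInstance, Finset.mem_insert, Finset.mem_singleton] at hv
          have := pathBidder_le c t
          omega
        · exact le_trans (ih x hx) (by omega)
    · rw [onlineRun] at hx; simp only [dif_neg h] at hx; exact le_trans (ih x hx) (by omega)

lemma profit_step (m : ℕ) (c : ℕ → Bool) (Alg : List (Finset ℕ) → Option ℕ) (t : ℕ)
    (h : t < m)
    (hX : (onlineRun m (pathInstance m c) Alg (t+1)).2 ≠ (onlineRun m (pathInstance m c) Alg t).2) :
    pathBidder c t ∉ (onlineRun m (pathInstance m c) Alg t).1 ∧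
    (pathBidder c t ∈ (onlineRun m (pathInstance m c) Alg (t+1)).1 ∨
      t + 1 ∈ (onlineRun m (pathInstance m c) Alg (t+1)).1) := by
  rcases onlineRun_succ_cases m (pathInstance m c) Alg t h with he | ⟨v, hv, hvM, he⟩
  · exact absurd (congrArg Prod.snd he) hX
  · by_cases hw : ∃ w ∈ pathInstance m c ⟨t, h⟩, w ≠ v ∧ w ∉ (onlineRun m (pathInstance m c) Alg t).1
    · obtain ⟨w, hwks, hwv, hwM⟩ := hw
      simp only [pathInstance, Finset.mem_insert, Finset.mem_singleton] at hv hwks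
      constructor
      · rcases hv with rfl | rfl
        · exact hvM
        · rcases hwks with rfl | rfl
          · exact hwM
          · exact absurd rfl hwv
      · have hvmem : v ∈ (onlineRun m (pathInstance m c) Alg (t+1)).1 := by
          rw [he]; exact Finset.mem_insert_self _ _
        rcases hv with rfl | rfl
        · exact Or.inl hvmem
        · exact Or.inr hvmem
    · rw [he] at hX
      simp only [if_neg hw] at hX
      exact absurd rfl hX

def extb (m : ℕ) (b : Fin (m - 1) → Bool) : ℕ → Bool :=
  fun t => if h : t < m - 1 then b ⟨t, h⟩ else false

lemma extb_congr_pathBidder {m : ℕ} {b b' : Fin (m - 1) → Bool} {u : ℕ}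
    (h : ∀ s : Fin (m - 1), s.val < u → b s = b' s) :
    pathBidder (extb m b) u = pathBidder (extb m b') u := by
  apply pathBidder_congr
  intro s hs
  simp only [extb]
  split
  · exact h ⟨s, ‹_›⟩ hs
  · rfl

lemma runS_congr (m : ℕ) (Alg : List (Finset ℕ) → Option ℕ) (b b' : Fin (m - 1) → Bool)
    (t : ℕ) (h : ∀ s : Fin (m - 1), s.val + 1 < t → b s = b' s) :
    onlineRun m (pathInstance m (extb m b)) Alg t
      = onlineRun m (pathInstance m (extb m b')) Alg t := by
  apply onlineRun_congr
  intro u hu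
  simp only [pathInstance]
  rw [extb_congr_pathBidder (fun s hs => h s (by omega))]

lemma extb_update_lt {m : ℕ} (b : Fin (m - 1) → Bool) (i : Fin (m - 1)) (v : Bool)
    {s : Fin (m - 1)} (hs : s ≠ i) : Function.update b i v s = b s :=
  Function.update_of_ne hs v b

lemma pathBidder_update {m : ℕ} (b : Fin (m - 1) → Bool) (i : Fin (m - 1)) (v : Bool) :
    pathBidder (extb m (Function.update b i v)) (i.val + 1)
      = if v then pathBidder (extb m b) i.val else i.val + 1 := by
  have h1 : extb m (Function.update b i v) i.val = v := by
    simp only [extb, dif_pos i.isLt, Fin.eta, Function.update_self]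
  have h2 : pathBidder (extb m (Function.update b i v)) i.val
      = pathBidder (extb m b) i.val :=
    extb_congr_pathBidder (fun s hs =>
      extb_update_lt b i v (by intro he; rw [he] at hs; omega))
  simp only [pathBidder, h1, h2]

lemma run_update {m : ℕ} (Alg : List (Finset ℕ) → Option ℕ) (b : Fin (m - 1) → Bool)
    (i : Fin (m - 1)) (v : Bool) (t : ℕ) (ht : t ≤ i.val + 1) :
    onlineRun m (pathInstance m (extb m (Function.update b i v))) Alg t
      = onlineRun m (pathInstance m (extb m b)) Alg t :=
  runS_congr m Alg _ _ t (fun s hs =>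
    extb_update_lt b i v (by intro he; rw [he] at hs; omega))

noncomputable section
open Classical

def Rn (m : ℕ) (Alg : List (Finset ℕ) → Option ℕ) (b : Fin (m - 1) → Bool) (t : ℕ) :
    Finset ℕ × ℕ := onlineRun m (pathInstance m (extb m b)) Alg t

def Xn (m : ℕ) (Alg : List (Finset ℕ) → Option ℕ) (t : ℕ) (b : Fin (m - 1) → Bool) : ℕ :=
  (Rn m Alg b (t+1)).2 - (Rn m Alg b t).2

def Zn (m : ℕ) (Alg : List (Finset ℕ) → Option ℕ) (t : ℕ) (b : Fin (m - 1) → Bool) : ℕ :=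
  if pathBidder (extb m b) t ∈ (Rn m Alg b t).1 then 1 else 0

def gn (m : ℕ) (Alg : List (Finset ℕ) → Option ℕ) (t : ℕ) : ℕ :=
  ∑ b : Fin (m - 1) → Bool, Xn m Alg t b

def zn (m : ℕ) (Alg : List (Finset ℕ) → Option ℕ) (t : ℕ) : ℕ :=
  ∑ b : Fin (m - 1) → Bool, Zn m Alg t b

lemma Xn_step (m : ℕ) (Alg : List (Finset ℕ) → Option ℕ) (b : Fin (m - 1) → Bool) (t : ℕ) :
    (Rn m Alg b (t+1)).2 = (Rn m Alg b t).2 + Xn m Alg t b ∧ Xn m Alg t b ≤ 1 := by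
  have := onlineRun_profit_mono m (pathInstance m (extb m b)) Alg t
  unfold Xn Rn
  omega

lemma Rn_profit (m : ℕ) (Alg : List (Finset ℕ) → Option ℕ) (b : Fin (m - 1) → Bool) (k : ℕ) :
    (Rn m Alg b k).2 = ∑ t ∈ Finset.range k, Xn m Alg t b := by
  induction k with
  | zero => simp [Rn, onlineRun]
  | succ k ih => rw [Finset.sum_range_succ, ← ih, (Xn_step m Alg b k).1]

lemma XZ_le (m : ℕ) (Alg : List (Finset ℕ) → Option ℕ) (t : ℕ) (ht : t < m)
    (b : Fin (m - 1) → Bool) : Xn m Alg t b + Zn m Alg t b ≤ 1 := by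
  by_cases hz : pathBidder (extb m b) t ∈ (Rn m Alg b t).1
  · have hx : Xn m Alg t b = 0 := by
      by_contra hx
      have hne : (onlineRun m (pathInstance m (extb m b)) Alg (t+1)).2
          ≠ (onlineRun m (pathInstance m (extb m b)) Alg t).2 := by
        have h1 := (Xn_step m Alg b t).1
        unfold Xn Rn at h1 hx
        omega
      exact (profit_step m (extb m b) Alg t ht hne).1 hz
    unfold Zn
    rw [hx, if_pos hz]
  · have := (Xn_step m Alg b t).2
    unfold Zn
    rw [if_neg hz]
    omega

lemma pair_ineq (m : ℕ) (Alg : List (Finset ℕ) → Option ℕ) (t : ℕ) (ht : t + 1 < m)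
    (b : Fin (m - 1) → Bool) :
    Zn m Alg t b + Xn m Alg t b ≤
      Zn m Alg (t+1) (Function.update b ⟨t, by omega⟩ true)
      + Zn m Alg (t+1) (Function.update b ⟨t, by omega⟩ false) := by
  set i : Fin (m - 1) := ⟨t, by omega⟩ with hi
  have hrun : ∀ v, Rn m Alg (Function.update b i v) (t+1) = Rn m Alg b (t+1) := by
    intro v
    unfold Rn
    exact run_update Alg b i v (t+1) (by simp [hi])
  have hpbt : ∀ v, pathBidder (extb m (Function.update b i v)) (t+1)
      = if v = true then pathBidder (extb m b) t else t + 1 := by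
    intro v
    have h := pathBidder_update b i v
    simpa [hi] using h
  have hZtrue : Zn m Alg (t+1) (Function.update b i true)
      = if pathBidder (extb m b) t ∈ (Rn m Alg b (t+1)).1 then 1 else 0 := by
    unfold Zn
    rw [hrun, hpbt]
    simp
  have hZfalse : Zn m Alg (t+1) (Function.update b i false)
      = if t + 1 ∈ (Rn m Alg b (t+1)).1 then 1 else 0 := by
    unfold Zn
    rw [hrun, hpbt]
    simp
  rw [hZtrue, hZfalse]
  by_cases hz : pathBidder (extb m b) t ∈ (Rn m Alg b t).1
  · have hmem : pathBidder (extb m b) t ∈ (Rn m Alg b (t+1)).1 := by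
      unfold Rn
      exact onlineRun_mono m _ Alg t hz
    have hXZ := XZ_le m Alg t (by omega) b
    unfold Zn at hXZ ⊢
    rw [if_pos hz] at hXZ ⊢
    rw [if_pos hmem]
    omega
  · have hZ0 : Zn m Alg t b = 0 := by unfold Zn; rw [if_neg hz]
    rw [hZ0]
    rcases Nat.eq_zero_or_pos (Xn m Alg t b) with h0 | hpos
    · simp [h0]
    · have hne : (onlineRun m (pathInstance m (extb m b)) Alg (t+1)).2
          ≠ (onlineRun m (pathInstance m (extb m b)) Alg t).2 := by
        have h1 := (Xn_step m Alg b t).1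
        unfold Xn Rn at h1 hpos
        omega
      have hx1 := (Xn_step m Alg b t).2
      rcases (profit_step m (extb m b) Alg t (by omega) hne).2 with hmem | hmem
      · rw [if_pos (show pathBidder (extb m b) t ∈ (Rn m Alg b (t+1)).1 from hmem)]
        omega
      · rw [if_pos (show t + 1 ∈ (Rn m Alg b (t+1)).1 from hmem)]
        omega

lemma sum_update_pair {n : ℕ} (f : (Fin n → Bool) → ℕ) (i : Fin n) :
    ∑ b : Fin n → Bool, (f (Function.update b i true) + f (Function.update b i false))
      = 2 * ∑ b : Fin n → Bool, f b := by
  have h1 : ∀ b : Fin n → Bool,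
      f (Function.update b i true) + f (Function.update b i false)
        = f b + f (Function.update b i (!b i)) := by
    intro b
    cases hbi : b i with
    | false =>
      have h : Function.update b i false = b := by rw [← hbi, Function.update_eq_self]
      rw [h]
      simp only [Bool.not_false]
      omega
    | true =>
      have h : Function.update b i true = b := by rw [← hbi, Function.update_eq_self]
      rw [h]
      simp only [Bool.not_true]
  simp_rw [h1]
  rw [Finset.sum_add_distrib]
  have h2 : ∑ b : Fin n → Bool, f (Function.update b i (!b i))
      = ∑ b : Fin n → Bool, f b := by
    apply Fintype.sum_bijective (fun b : Fin n → Bool => Function.update b i (!b i))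
    · apply Function.Involutive.bijective
      intro b
      simp only [Function.update_idem, Function.update_self, Bool.not_not,
        Function.update_eq_self]
    · intro b
      rfl
  rw [h2]
  ring

lemma z_pair (m : ℕ) (Alg : List (Finset ℕ) → Option ℕ) (t : ℕ) (ht : t + 1 < m) :
    zn m Alg t + gn m Alg t ≤ 2 * zn m Alg (t+1) := by
  unfold zn gn
  rw [← Finset.sum_add_distrib, ← sum_update_pair (Zn m Alg (t+1)) ⟨t, by omega⟩]
  exact Finset.sum_le_sum (fun b _ => pair_ineq m Alg t ht b)

lemma gz_le (m : ℕ) (Alg : List (Finset ℕ) → Option ℕ) (t : ℕ) (ht : t < m) :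
    gn m Alg t + zn m Alg t ≤ 2 ^ (m - 1) := by
  unfold gn zn
  rw [← Finset.sum_add_distrib]
  calc ∑ b : Fin (m - 1) → Bool, (Xn m Alg t b + Zn m Alg t b)
      ≤ ∑ _b : Fin (m - 1) → Bool, 1 :=
        Finset.sum_le_sum (fun b _ => XZ_le m Alg t ht b)
    _ = 2 ^ (m - 1) := by
        rw [Finset.sum_const, Finset.card_univ, Fintype.card_fun]
        simp

lemma zn_zero (m : ℕ) (Alg : List (Finset ℕ) → Option ℕ) : zn m Alg 0 = 0 := by
  unfold zn Zn Rn
  simp [onlineRun]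

lemma part2 (m : ℕ) (hm : 1 ≤ m) (Alg : List (Finset ℕ) → Option ℕ) :
    2 * ∑ b : Fin (m - 1) → Bool, (Rn m Alg b m).2 ≤ (m + 1) * 2 ^ (m - 1) := by
  have hsum : ∑ b : Fin (m - 1) → Bool, (Rn m Alg b m).2
      = ∑ t ∈ Finset.range m, gn m Alg t := by
    simp_rw [Rn_profit]
    rw [Finset.sum_comm]
    rfl
  have key : ∀ k, k ≤ m - 1 →
      2 * ∑ t ∈ Finset.range k, gn m Alg t ≤ k * 2 ^ (m - 1) + 2 * zn m Alg k := by
    intro k hk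
    induction k with
    | zero => simp [zn_zero]
    | succ k ih =>
      have h5 := z_pair m Alg k (by omega)
      have h6 := gz_le m Alg k (by omega)
      have h7 := ih (by omega)
      rw [Finset.sum_range_succ, add_mul, one_mul]
      generalize k * 2 ^ (m - 1) = A at h7 ⊢
      omega
  have h1 := key (m - 1) le_rfl
  have h2 := gz_le m Alg (m - 1) (by omega)
  have hr : Finset.range m = Finset.range ((m - 1) + 1) := by congr 1; omega
  rw [hsum, hr, Finset.sum_range_succ]
  have h3 : (m + 1) * 2 ^ (m - 1) = (m - 1) * 2 ^ (m - 1) + 2 * 2 ^ (m - 1) := by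
    cases m with
    | zero => omega
    | succ k => simp only [Nat.add_sub_cancel]; ring
  rw [h3]
  omega

/-- randomized lower bound of 2, via Yao's principle: for the uniform
distribution over the `2^(m-1)` path-like instances with `m` keywords, every instance
admits an offline second-price matching of value `m`, while every deterministic online
algorithm has expected profit at most `(m+1)/2`.  Hence no randomized online algorithm
for 2PM has competitive ratio better than `2`. -/
theorem stmt14 (m : ℕ) (hm : 1 ≤ m) :
    (∀ b : ℕ → Bool,
      ∃ (S : Finset (Fin m)) (g w : Fin m → ℕ),
        IsSecondPriceMatching (pathInstance m b) S g w ∧ S.card = m) ∧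
    (∀ Alg : List (Finset ℕ) → Option ℕ,
      (∑ b : Fin (m - 1) → Bool,
          ((onlineRun m (pathInstance m
              (fun t => if h : t < m - 1 then b ⟨t, h⟩ else false)) Alg m).2 : ℝ)) /
        (2 : ℝ) ^ (m - 1) ≤ ((m : ℝ) + 1) / 2) := by
  constructor
  · exact part1 m
  · intro Alg
    have key := part2 m hm Alg
    have hS : (∑ b : Fin (m - 1) → Bool,
        ((onlineRun m (pathInstance m
            (fun t => if h : t < m - 1 then b ⟨t, h⟩ else false)) Alg m).2 : ℝ))
        = (((∑ b : Fin (m - 1) → Bool, (Rn m Alg b m).2 : ℕ)) : ℝ) := by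
      rw [Nat.cast_sum]
      rfl
    rw [hS, div_le_div_iff₀ (by positivity) (by norm_num)]
    calc ((((∑ b : Fin (m - 1) → Bool, (Rn m Alg b m).2 : ℕ)) : ℝ)) * 2
        = ((2 * ∑ b : Fin (m - 1) → Bool, (Rn m Alg b m).2 : ℕ) : ℝ) := by
          push_cast; ring
      _ ≤ (((m + 1) * 2 ^ (m - 1) : ℕ) : ℝ) := Nat.cast_le.mpr key
      _ = ((m : ℝ) + 1) * 2 ^ (m - 1) := by push_cast; ring

end
end

section
/- For any m ≥ 1, no deterministic online algorithm for Second-Price Matching achieves a competitive ratio better than 1/m: an adversary can construct, depending on the algorithm's choices, an instance with m keywords on which the algorithm's profit is at most 1 while the optimal offline second-price matching has value at least m. -/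
namespace Adv

variable (Alg : List (Finset ℕ) → Option ℕ)

def Kof (b : Option ℕ) (t : ℕ) : Finset ℕ :=
  match b with
  | none => {2*t, 2*t+1}
  | some v => {v, 2*t}

def advStep (t : ℕ) (p : List (Finset ℕ) × Option ℕ) : List (Finset ℕ) × Option ℕ :=
  let Kt := Kof p.2 t
  (p.1 ++ [Kt],
    match p.2 with
    | some v => some v
    | none =>
      match Alg (p.1 ++ [Kt]) with
      | some v => if v ∈ Kt then some v else none
      | none => none)

def sim : ℕ → List (Finset ℕ) × Option ℕ
  | 0 => ([], none)
  | t + 1 => advStep Alg t (sim t)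

def K (t : ℕ) : Finset ℕ := Kof (sim Alg t).2 t

lemma sim_fst (t : ℕ) : (sim Alg t).1 = (List.range t).map (K Alg) := by
  induction t with
  | zero => rfl
  | succ t ih =>
    show (sim Alg t).1 ++ [K Alg t] = _
    rw [List.range_succ, List.map_append, ih]
    rfl

lemma sim_succ_some {t v} (h : (sim Alg t).2 = some v) :
    (sim Alg (t+1)).2 = some v := by
  show (advStep Alg t (sim Alg t)).2 = some v
  simp [advStep, h]

lemma sim_succ_none {t} (h : (sim Alg t).2 = none) :
    (sim Alg (t+1)).2 =
      match Alg ((sim Alg t).1 ++ [K Alg t]) with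
      | some v => if v ∈ K Alg t then some v else none
      | none => none := by
  show (advStep Alg t (sim Alg t)).2 = _
  simp [advStep, h, K]

lemma sim_mono {t t' v} (h : t ≤ t') (hs : (sim Alg t).2 = some v) :
    (sim Alg t').2 = some v := by
  induction t' with
  | zero =>
    have : t = 0 := by omega
    subst this; exact hs
  | succ t' ih =>
    rcases Nat.lt_or_ge t (t'+1) with hlt | hge
    · exact sim_succ_some Alg (ih (by omega))
    · have : t = t' + 1 := by omega
      subst this; exact hs

lemma sim_none_of_le {t t'} (h : t ≤ t') (hs : (sim Alg t').2 = none) :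
    (sim Alg t).2 = none := by
  cases hv : (sim Alg t).2 with
  | none => rfl
  | some v => rw [sim_mono Alg h hv] at hs; exact absurd hs (by simp)

lemma v_mem {t v} (h0 : (sim Alg t).2 = none) (h1 : (sim Alg (t+1)).2 = some v) :
    v ∈ K Alg t := by
  rw [sim_succ_none Alg h0] at h1
  cases ha : Alg ((sim Alg t).1 ++ [K Alg t]) with
  | none => rw [ha] at h1; exact absurd h1 (by simp)
  | some u =>
    rw [ha] at h1
    simp only [] at h1
    by_cases hu : u ∈ K Alg t
    · rw [if_pos hu] at h1; injection h1 with h1; subst h1; exact hu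
    · rw [if_neg hu] at h1; exact absurd h1 (by simp)

lemma v_lt {t v} (h : (sim Alg t).2 = some v) : v < 2*t := by
  induction t with
  | zero => exact absurd h (by simp [sim])
  | succ t ih =>
    cases hp : (sim Alg t).2 with
    | some v' =>
      have := sim_succ_some Alg hp
      rw [this] at h; injection h with h; subst h
      exact lt_trans (ih hp) (by omega)
    | none =>
      have hv := v_mem Alg hp h
      simp only [K, Kof, hp] at hv
      simp only [Finset.mem_insert, Finset.mem_singleton] at hv
      omega

lemma v_ge {t t' v} (h0 : (sim Alg t).2 = none) (h1 : (sim Alg t').2 = some v) :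
    2*t ≤ v := by
  induction t' with
  | zero => exact absurd h1 (by simp [sim])
  | succ t' ih =>
    cases hp : (sim Alg t').2 with
    | some v' =>
      have := sim_succ_some Alg hp
      rw [this] at h1; injection h1 with h1; subst h1
      exact ih hp
    | none =>
      have hv := v_mem Alg hp h1
      simp only [K, Kof, hp] at hv
      simp only [Finset.mem_insert, Finset.mem_singleton] at hv
      have htt : t ≤ t' := by
        by_contra hc
        have : t' + 1 ≤ t := by omega
        rw [sim_mono Alg this h1] at h0; exact absurd h0 (by simp)
      omega

def gg (t : ℕ) : ℕ :=
  match (sim Alg t).2 with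
  | some _ => 2*t
  | none =>
    match (sim Alg (t+1)).2 with
    | none => 2*t
    | some v => if v = 2*t then 2*t+1 else 2*t

def ww (t : ℕ) : ℕ := ((sim Alg (t+1)).2).getD (2*t+1)

lemma gg_bounds (t : ℕ) : 2*t ≤ gg Alg t ∧ gg Alg t ≤ 2*t+1 := by
  unfold gg
  cases (sim Alg t).2 with
  | some v => simp
  | none =>
    cases (sim Alg (t+1)).2 with
    | none => simp
    | some v => simp only []; split <;> omega

lemma gg_mem (t : ℕ) : gg Alg t ∈ K Alg t := by
  unfold gg
  cases hp : (sim Alg t).2 with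
  | some v => simp [K, Kof, hp]
  | none =>
    cases hq : (sim Alg (t+1)).2 with
    | none => simp [K, Kof, hp]
    | some v =>
      have hv := v_mem Alg hp hq
      simp only [K, Kof, hp] at hv ⊢
      simp only [Finset.mem_insert, Finset.mem_singleton] at hv ⊢
      split <;> omega

lemma ww_mem (t : ℕ) : ww Alg t ∈ K Alg t := by
  unfold ww
  cases hq : (sim Alg (t+1)).2 with
  | none =>
    have hp := sim_none_of_le Alg (Nat.le_succ t) hq
    simp [K, Kof, hp]
  | some v =>
    cases hp : (sim Alg t).2 with
    | some v' =>
      have := sim_succ_some Alg hp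
      rw [this] at hq; injection hq with hq; subst hq
      simp [K, Kof, hp]
    | none =>
      simpa using v_mem Alg hp hq

lemma gg_ne_ww (t : ℕ) : gg Alg t ≠ ww Alg t := by
  unfold gg ww
  cases hp : (sim Alg t).2 with
  | some v' =>
    have hq := sim_succ_some Alg hp
    rw [hq]
    have := v_lt Alg hp
    simp only [Option.getD_some]
    omega
  | none =>
    cases hq : (sim Alg (t+1)).2 with
    | none => simp
    | some v =>
      simp only [Option.getD_some]
      split <;> omega

lemma gg_ne_ww' {u' u : ℕ} (h : u' < u) : gg Alg u' ≠ ww Alg u := by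
  have hb := gg_bounds Alg u'
  unfold ww
  cases hq : (sim Alg (u+1)).2 with
  | none => simp only [Option.getD_none]; omega
  | some v =>
    simp only [Option.getD_some]
    cases hp : (sim Alg u').2 with
    | some v₀ =>
      have h1 : (sim Alg (u+1)).2 = some v₀ := sim_mono Alg (by omega) hp
      rw [hq] at h1; injection h1 with h1; subst h1
      have hlt := v_lt Alg hp
      have : gg Alg u' = 2*u' := by unfold gg; rw [hp]
      omega
    | none =>
      cases hq' : (sim Alg (u'+1)).2 with
      | none =>
        have := v_ge Alg hq' hq
        omega
      | some v₁ =>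
        have h1 : (sim Alg (u+1)).2 = some v₁ := sim_mono Alg (by omega) hq'
        rw [hq] at h1; injection h1 with h1; subst h1
        have : gg Alg u' = if v = 2*u' then 2*u'+1 else 2*u' := by
          unfold gg; rw [hp, hq']
        rw [this]; split <;> omega

lemma take_ofFn {m : ℕ} (t : ℕ) (ht : t < m) :
    (List.ofFn (fun i : Fin m => K Alg (i : ℕ))).take (t+1) = (sim Alg (t+1)).1 := by
  rw [sim_fst]
  apply List.ext_getElem
  · simp; omega
  · intro i h1 h2
    simp only [List.getElem_take, List.getElem_ofFn, List.getElem_map,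
      List.getElem_range]

lemma run_inv (m : ℕ) (t : ℕ) (ht : t ≤ m) :
    ((sim Alg t).2 = none →
      onlineRun m (fun i : Fin m => K Alg (i : ℕ)) Alg t = (∅, 0)) ∧
    (∀ v, (sim Alg t).2 = some v →
      v ∈ (onlineRun m (fun i : Fin m => K Alg (i : ℕ)) Alg t).1 ∧
      (onlineRun m (fun i : Fin m => K Alg (i : ℕ)) Alg t).2 = 1) := by
  induction t with
  | zero =>
    refine ⟨fun _ => rfl, fun v hv => absurd hv (by simp [sim])⟩
  | succ t ih =>
    have htm : t < m := ht
    obtain ⟨ih0, ih1⟩ := ih (le_of_lt htm)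
    have hrw : onlineRun m (fun i : Fin m => K Alg (i : ℕ)) Alg (t+1) =
        (let s := onlineRun m (fun i : Fin m => K Alg (i : ℕ)) Alg t
         match Alg ((sim Alg t).1 ++ [K Alg t]) with
         | some v =>
           if v ∈ K Alg t ∧ v ∉ s.1 then
             (insert v s.1,
               s.2 + if ∃ w ∈ K Alg t, w ≠ v ∧ w ∉ s.1 then 1 else 0)
           else s
         | none => s) := by
      show (if h : t < m then _ else _) = _
      rw [dif_pos htm, take_ofFn Alg t htm]
      rfl
    rw [hrw]
    cases ha : Alg ((sim Alg t).1 ++ [K Alg t]) with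
    | none =>
      simp only []
      cases hp : (sim Alg t).2 with
      | none =>
        have hq : (sim Alg (t+1)).2 = none := by
          rw [sim_succ_none Alg hp, ha]
        refine ⟨fun _ => ih0 hp, fun v hv => ?_⟩
        rw [hq] at hv; exact absurd hv (by simp)
      | some v =>
        have hq : (sim Alg (t+1)).2 = some v := sim_succ_some Alg hp
        refine ⟨fun h => ?_, fun v' hv' => ?_⟩
        · rw [hq] at h; exact absurd h (by simp)
        · rw [hq] at hv'; injection hv' with hv'; subst hv'
          exact ih1 v hp
    | some u =>
      simp only []
      cases hp : (sim Alg t).2 with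
      | none =>
        have hs0 := ih0 hp
        rw [hs0]
        have hKt : K Alg t = {2*t, 2*t+1} := by simp [K, Kof, hp]
        by_cases hu : u ∈ K Alg t
        · have hq : (sim Alg (t+1)).2 = some u := by
            rw [sim_succ_none Alg hp, ha]; simp [hu]
          rw [if_pos ⟨hu, by simp⟩]
          have hex : ∃ w ∈ K Alg t, w ≠ u ∧ w ∉ (∅ : Finset ℕ) := by
            rw [hKt] at hu ⊢
            simp only [Finset.mem_insert, Finset.mem_singleton] at hu ⊢
            rcases hu with h | h
            · exact ⟨2*t+1, Or.inr rfl, by omega, by simp⟩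
            · exact ⟨2*t, Or.inl rfl, by omega, by simp⟩
          rw [if_pos hex]
          refine ⟨fun h => ?_, fun v' hv' => ?_⟩
          · rw [hq] at h; exact absurd h (by simp)
          · rw [hq] at hv'; injection hv' with hv'; subst hv'
            exact ⟨by simp, rfl⟩
        · have hq : (sim Alg (t+1)).2 = none := by
            rw [sim_succ_none Alg hp, ha]; simp [hu]
          rw [if_neg (by intro hc; exact hu hc.1)]
          refine ⟨fun _ => rfl, fun v' hv' => ?_⟩
          rw [hq] at hv'; exact absurd hv' (by simp)
      | some v =>
        obtain ⟨hvM, hpr⟩ := ih1 v hp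
        have hq : (sim Alg (t+1)).2 = some v := sim_succ_some Alg hp
        have hKt : K Alg t = {v, 2*t} := by simp [K, Kof, hp]
        refine ⟨fun h => ?_, fun v' hv' => ?_⟩
        · rw [hq] at h; exact absurd h (by simp)
        · rw [hq] at hv'; injection hv' with hv'; subst hv'
          set s := onlineRun m (fun i : Fin m => K Alg (i : ℕ)) Alg t with hsdef
          by_cases hc : u ∈ K Alg t ∧ u ∉ s.1
          · rw [if_pos hc]
            have hnex : ¬ ∃ w ∈ K Alg t, w ≠ u ∧ w ∉ s.1 := by
              rintro ⟨w, hwK, hwu, hwM⟩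
              rw [hKt] at hwK hc
              simp only [Finset.mem_insert, Finset.mem_singleton] at hwK
              have hc1 := hc.1
              simp only [Finset.mem_insert, Finset.mem_singleton] at hc1
              rcases hwK with rfl | rfl
              · exact hwM hvM
              · rcases hc1 with rfl | rfl
                · exact hc.2 hvM
                · exact hwu rfl
            rw [if_neg hnex]
            exact ⟨Finset.mem_insert_of_mem hvM, by simp [hpr]⟩
          · rw [if_neg hc]
            exact ⟨hvM, hpr⟩

end Adv

/-- for every deterministic online algorithm and every `m ≥ 1` there is
an instance with `m` keywords on which the algorithm earns profit at most `1` while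
the optimal offline second-price matching has value `m`; hence no deterministic
online algorithm for 2PM is better than `m`-competitive. -/
theorem stmt15 (Alg : List (Finset ℕ) → Option ℕ) (m : ℕ) (hm : 1 ≤ m) :
    ∃ ks : Fin m → Finset ℕ,
      (onlineRun m ks Alg m).2 ≤ 1 ∧
      ∃ (S : Finset (Fin m)) (g w : Fin m → ℕ),
        IsSecondPriceMatching ks S g w ∧ S.card = m := by
  refine ⟨fun i => Adv.K Alg (i : ℕ), ?_, Finset.univ,
    (fun u => Adv.gg Alg (u : ℕ)), (fun u => Adv.ww Alg (u : ℕ)), ?_, ?_⟩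
  · obtain ⟨h0, h1⟩ := Adv.run_inv Alg m m le_rfl
    cases hq : (Adv.sim Alg m).2 with
    | none => rw [h0 hq]; exact Nat.zero_le 1
    | some v => exact le_of_eq (h1 v hq).2
  · refine ⟨?_, ?_, ?_⟩
    · intro u _
      exact ⟨Adv.gg_mem Alg u, Adv.ww_mem Alg u, Adv.gg_ne_ww Alg u⟩
    · intro u _ u' _ hne
      have b1 := Adv.gg_bounds Alg (u : ℕ)
      have b2 := Adv.gg_bounds Alg (u' : ℕ)
      have hne' : (u : ℕ) ≠ (u' : ℕ) := fun h => hne (Fin.ext h)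
      show Adv.gg Alg (u : ℕ) ≠ Adv.gg Alg (u' : ℕ)
      omega
    · intro u _ u' _ hlt
      have hlt' : (u' : ℕ) < (u : ℕ) := hlt
      have b1 := Adv.gg_bounds Alg (u : ℕ)
      have b2 := Adv.gg_bounds Alg (u' : ℕ)
      exact ⟨show Adv.gg Alg (u' : ℕ) ≠ Adv.gg Alg (u : ℕ) by omega,
        Adv.gg_ne_ww' Alg hlt'⟩
  · simp
end
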